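/- arXiv:1910.01247 — 3 statements merged into one kernel-verified Lean document; each statement's English description precedes it below -/
import Mathlib

section
/- Under the assumptions above, P(Z ≤ (1-α)n) ≤ 2^{H(α)·n − ms·log₂(1/(1-α))}, where H is the binary entropy function. In particular, if ms > H(α)·n / log₂(1/(1-α)), this probability is strictly less than 1 and decays exponentially in ms. -/
open Finset

/-- The binary entropy function in base 2. -/
noncomputable def binEnt (p : ℝ) : ℝ :=
  p * Real.logb 2 (1 / p) + (1 - p) * Real.logb 2 (1 / (1 - p))

lemma choose_bound (n a : ℕ) (α : ℝ) (h0 : 0 < α) (h1 : α < 1) (han : a ≤ n) :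
    (n.choose a : ℝ) ≤ (1/α)^a * (1/(1-α))^(n-a) := by
  have h1α : (0:ℝ) < 1 - α := by linarith
  have key : α^a * (1-α)^(n-a) * (n.choose a : ℝ) ≤ 1 := by
    have := add_pow α (1-α) n
    have hsum : α^a * (1-α)^(n-a) * (n.choose a : ℝ)
        ≤ ∑ k ∈ Finset.range (n+1), α^k * (1-α)^(n-k) * (n.choose k : ℝ) := by
      apply Finset.single_le_sum (f := fun k => α^k * (1-α)^(n-k) * (n.choose k : ℝ))
      · intro k _
        positivity
      · exact Finset.mem_range.2 (Nat.lt_succ_of_le han)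
    calc α^a * (1-α)^(n-a) * (n.choose a : ℝ)
        ≤ ∑ k ∈ Finset.range (n+1), α^k * (1-α)^(n-k) * (n.choose k : ℝ) := hsum
      _ = (α + (1-α))^n := (add_pow α (1-α) n).symm
      _ = 1 := by norm_num
  have hpos : (0:ℝ) < α^a * (1-α)^(n-a) := by positivity
  rw [← le_div_iff₀' hpos] at key
  calc (n.choose a : ℝ) ≤ 1 / (α^a * (1-α)^(n-a)) := key
    _ = (1/α)^a * (1/(1-α))^(n-a) := by
        field_simp
        have hx : α^a ≠ 0 := by positivity
        have hy : (1-α)^(n-a) ≠ 0 := by positivity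
        rw [one_div_pow, one_div_pow, one_div, one_div, mul_assoc, ← mul_inv,
          mul_inv_cancel₀ (mul_ne_zero hx hy)]

lemma count_bound (k n b : ℕ) (hb : b ≤ n) :
    (((Finset.univ : Finset (Fin k → Fin n)).filter
        (fun f => (Finset.univ.image f).card ≤ b)).card : ℕ)
      ≤ n.choose b * b ^ k := by
  classical
  have hsub : ((Finset.univ : Finset (Fin k → Fin n)).filter
        (fun f => (Finset.univ.image f).card ≤ b))
      ⊆ (Finset.powersetCard b (Finset.univ : Finset (Fin n))).biUnion
          (fun S => Fintype.piFinset (fun _ : Fin k => S)) := by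
    intro f hf
    rw [Finset.mem_filter] at hf
    obtain ⟨S, hS1, _, hS3⟩ := Finset.exists_subsuperset_card_eq
      (Finset.subset_univ (Finset.univ.image f)) hf.2 (by simpa using hb)
    refine Finset.mem_biUnion.2 ⟨S, ?_, ?_⟩
    · exact Finset.mem_powersetCard.2 ⟨Finset.subset_univ _, hS3⟩
    · exact Fintype.mem_piFinset.2 fun i => hS1 (Finset.mem_image_of_mem f (Finset.mem_univ i))
  calc _ ≤ ((Finset.powersetCard b (Finset.univ : Finset (Fin n))).biUnion
          (fun S => Fintype.piFinset (fun _ : Fin k => S))).card :=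
        Finset.card_le_card hsub
    _ ≤ ∑ S ∈ Finset.powersetCard b (Finset.univ : Finset (Fin n)),
          (Fintype.piFinset (fun _ : Fin k => S)).card := Finset.card_biUnion_le
    _ = ∑ S ∈ Finset.powersetCard b (Finset.univ : Finset (Fin n)), b ^ k := by
        apply Finset.sum_congr rfl
        intro S hS
        rw [Fintype.card_piFinset]
        simp [(Finset.mem_powersetCard.1 hS).2]
    _ = n.choose b * b ^ k := by
        rw [Finset.sum_const, Finset.card_powersetCard, smul_eq_mul]
        simp

/-- `Z` is the number of distinct values among `m·s` i.i.d. uniform samples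
from `n` symbols; `α ∈ (0,1)` with `α·n` an integer.  Then
`P(Z ≤ (1-α)n) ≤ 2^(H(α)·n − m·s·log₂(1/(1-α)))`; in particular if
`m·s > H(α)·n / log₂(1/(1-α))` the bound is `< 1`, and it decays exponentially
(tends to 0) as `m·s → ∞`. -/
theorem stmt4 (n m s a : ℕ) (α : ℝ) (hn : 0 < n) (hα : 0 < α ∧ α < 1)
    (ha : (a : ℝ) = α * n) :
    ((((Finset.univ : Finset (Fin (m * s) → Fin n)).filter
            (fun f => ((Finset.univ.image f).card : ℝ) ≤ (1 - α) * n)).card : ℝ) /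
          ((n : ℝ) ^ (m * s))
        ≤ (2 : ℝ) ^ (binEnt α * n - (m * s : ℝ) * Real.logb 2 (1 / (1 - α)))) ∧
    ((m * s : ℝ) > binEnt α * n / Real.logb 2 (1 / (1 - α)) →
        (2 : ℝ) ^ (binEnt α * n - (m * s : ℝ) * Real.logb 2 (1 / (1 - α))) < 1) ∧
    Filter.Tendsto (fun N : ℕ => (2 : ℝ) ^ (binEnt α * n - (N : ℝ) * Real.logb 2 (1 / (1 - α))))
      Filter.atTop (nhds 0) := by
  classical
  obtain ⟨hα0, hα1⟩ := hα
  have h1α : (0:ℝ) < 1 - α := by linarith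
  have hnR : (0:ℝ) < n := Nat.cast_pos.2 hn
  have haltn : a < n := by
    have : (a:ℝ) < n := by rw [ha]; nlinarith
    exact_mod_cast this
  have halen : a ≤ n := haltn.le
  have hcast : ((n - a : ℕ) : ℝ) = (1 - α) * n := by
    rw [Nat.cast_sub halen, ha]; ring
  set L1 := Real.logb 2 (1/α) with hL1def
  set L2 := Real.logb 2 (1/(1-α)) with hL2def
  have hL2pos : 0 < L2 := Real.logb_pos one_lt_two (one_lt_one_div h1α (by linarith))
  have h2L1 : (2:ℝ) ^ L1 = 1/α := Real.rpow_logb two_pos (by norm_num) (by positivity)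
  have h2L2 : (2:ℝ) ^ L2 = 1/(1-α) := Real.rpow_logb two_pos (by norm_num) (by positivity)
  have hpow : ∀ N : ℕ, (2:ℝ) ^ (binEnt α * n - (N:ℝ) * L2)
      = (1/α)^a * (1/(1-α))^(n-a) * (1-α)^N := by
    intro N
    have hbe : binEnt α * n = (a:ℝ) * L1 + ((n-a:ℕ):ℝ) * L2 := by
      rw [binEnt, hcast, ha]; ring
    rw [sub_eq_add_neg, Real.rpow_add two_pos, hbe, Real.rpow_add two_pos,
      mul_comm (a:ℝ) L1, mul_comm ((n-a:ℕ):ℝ) L2,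
      Real.rpow_mul (by norm_num : (0:ℝ) ≤ 2), Real.rpow_mul (by norm_num : (0:ℝ) ≤ 2),
      h2L1, h2L2, Real.rpow_natCast, Real.rpow_natCast]
    congr 1
    rw [show -((N:ℝ)*L2) = -L2 * (N:ℝ) by ring, Real.rpow_mul (by norm_num : (0:ℝ) ≤ 2),
      Real.rpow_natCast, Real.rpow_neg (by norm_num : (0:ℝ) ≤ 2), h2L2]
    simp
  refine ⟨?_, ?_, ?_⟩
  · -- main bound
    have hfilter : ((Finset.univ : Finset (Fin (m * s) → Fin n)).filter
            (fun f => ((Finset.univ.image f).card : ℝ) ≤ (1 - α) * n))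
        = ((Finset.univ : Finset (Fin (m * s) → Fin n)).filter
            (fun f => (Finset.univ.image f).card ≤ n - a)) := by
      apply Finset.filter_congr
      intro f _
      rw [← hcast]
      exact_mod_cast Iff.rfl
    have hcount := count_bound (m*s) n (n-a) (Nat.sub_le n a)
    have hcountR : ((((Finset.univ : Finset (Fin (m * s) → Fin n)).filter
            (fun f => ((Finset.univ.image f).card : ℝ) ≤ (1 - α) * n)).card : ℝ))
        ≤ (n.choose a : ℝ) * ((n-a:ℕ):ℝ)^(m*s) := by
      rw [hfilter, ← Nat.choose_symm halen]
      exact_mod_cast hcount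
    rw [show ((m:ℝ)*(s:ℝ)) = ((m*s:ℕ):ℝ) by push_cast; ring, hpow (m*s),
      div_le_iff₀ (by positivity)]
    calc ((((Finset.univ : Finset (Fin (m * s) → Fin n)).filter
            (fun f => ((Finset.univ.image f).card : ℝ) ≤ (1 - α) * n)).card : ℝ))
        ≤ (n.choose a : ℝ) * ((n-a:ℕ):ℝ)^(m*s) := hcountR
      _ = (n.choose a : ℝ) * (1-α)^(m*s) * (n:ℝ)^(m*s) := by
          rw [hcast, mul_pow]; ring
      _ ≤ (1/α)^a * (1/(1-α))^(n-a) * (1-α)^(m*s) * (n:ℝ)^(m*s) := by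
          have := choose_bound n a α hα0 hα1 halen
          have h1 : (0:ℝ) ≤ (1-α)^(m*s) := by positivity
          have h2 : (0:ℝ) ≤ (n:ℝ)^(m*s) := by positivity
          apply mul_le_mul_of_nonneg_right _ h2
          exact mul_le_mul_of_nonneg_right this h1
  · -- strict bound
    intro hms
    apply Real.rpow_lt_one_of_one_lt_of_neg one_lt_two
    rw [gt_iff_lt, div_lt_iff₀ hL2pos] at hms
    linarith
  · -- tendsto
    have heq : (fun N : ℕ => (2 : ℝ) ^ (binEnt α * n - (N : ℝ) * L2))
        = fun N : ℕ => (1/α)^a * (1/(1-α))^(n-a) * (1-α)^N := funext hpow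
    rw [heq]
    have := tendsto_pow_atTop_nhds_zero_of_lt_one h1α.le (by linarith : 1 - α < 1)
    have := this.const_mul ((1/α)^a * (1/(1-α))^(n-a))
    simpa using this
end

section
/- Let H be an n×(n−k) parity-check matrix over GF(2) and let τ be the set of erased coordinates. The iterative peeling decoder—which repeatedly finds a parity check (column of H) with exactly one erased participating coordinate and recovers that coordinate—can recover all erased coordinates if and only if τ contains no nonempty stopping set. -/
open Finset

/-- `τ` is a stopping set of `H` if no column of `H` restricted to rows `τ` has exactly
one nonzero entry. -/
def IsStoppingSet {n m : ℕ} (H : Fin n → Fin m → ZMod 2) (τ : Finset (Fin n)) : Prop :=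
  ∀ j : Fin m, (τ.filter (fun i => H i j ≠ 0)).card ≠ 1

/-- One step of the peeling decoder: some parity check (column `j`) has exactly one
erased participating coordinate `i`, which is thereby recovered (removed from the
erased set). -/
def PeelStep {n m : ℕ} (H : Fin n → Fin m → ZMod 2) (τ τ' : Finset (Fin n)) : Prop :=
  ∃ i ∈ τ, ∃ j : Fin m, τ.filter (fun i' => H i' j ≠ 0) = {i} ∧ τ' = τ.erase i

/-! A stopping set inside the erased set can never be touched by a peeling step, since a check
with a single erased coordinate in it would have a single coordinate in the stopping set too.
Conversely, an erased set that is not itself a stopping set always admits a peeling step, and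
induction on its size finishes the decoding. -/

namespace IsStoppingSet

variable {n m : ℕ} {H : Fin n → Fin m → ZMod 2} {σ τ τ' : Finset (Fin n)}

theorem subset_of_peelStep (hσ : IsStoppingSet H σ) (hστ : σ ⊆ τ) (h : PeelStep H τ τ') :
    σ ⊆ τ' := by
  obtain ⟨i, -, j, hcheck, rfl⟩ := h
  have hi : i ∉ σ := by
    intro hiσ
    have hHi : H i j ≠ 0 :=
      (mem_filter.mp (hcheck.symm ▸ mem_singleton_self i : i ∈ τ.filter _)).2
    have hsub : σ.filter (fun i' => H i' j ≠ 0) ⊆ {i} :=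
      hcheck ▸ filter_subset_filter _ hστ
    exact hσ j (card_eq_one.mpr ⟨i, hsub.antisymm
      (singleton_subset_iff.mpr (mem_filter.mpr ⟨hiσ, hHi⟩))⟩)
  exact fun x hx => mem_erase.mpr ⟨ne_of_mem_of_not_mem hx hi, hστ hx⟩

theorem subset_of_reflTransGen (hσ : IsStoppingSet H σ) (hστ : σ ⊆ τ)
    (h : Relation.ReflTransGen (PeelStep H) τ τ') : σ ⊆ τ' := by
  induction h with
  | refl => exact hστ
  | tail _ hstep ih => exact hσ.subset_of_peelStep ih hstep

end IsStoppingSet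

theorem exists_peelStep_of_not_isStoppingSet {n m : ℕ} {H : Fin n → Fin m → ZMod 2}
    {τ : Finset (Fin n)} (h : ¬ IsStoppingSet H τ) : ∃ i ∈ τ, PeelStep H τ (τ.erase i) := by
  obtain ⟨j, hj⟩ := not_forall.mp h
  obtain ⟨i, hcheck⟩ := card_eq_one.mp (not_not.mp hj)
  have hi : i ∈ τ := filter_subset _ _ (hcheck.symm ▸ mem_singleton_self i)
  exact ⟨i, hi, i, hi, j, hcheck, rfl⟩

/-- the iterative peeling decoder can recover all erased coordinates `τ`
(i.e. reach the empty erased set) iff `τ` contains no nonempty stopping set. -/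
theorem stmt9 {n m : ℕ} (H : Fin n → Fin m → ZMod 2) (τ : Finset (Fin n)) :
    Relation.ReflTransGen (PeelStep H) τ ∅ ↔
      ∀ σ : Finset (Fin n), σ ⊆ τ → σ.Nonempty → ¬ IsStoppingSet H σ := by
  constructor
  · intro hdecode σ hστ hne hσ
    exact hne.ne_empty (subset_empty.mp (hσ.subset_of_reflTransGen hστ hdecode))
  · induction τ using strongInduction with
    | _ τ ih =>
      intro hno
      rcases τ.eq_empty_or_nonempty with rfl | hne
      · exact .refl
      obtain ⟨i, hi, hstep⟩ := exists_peelStep_of_not_isStoppingSet (hno τ subset_rfl hne)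
      exact .head hstep <| ih _ (erase_ssubset hi) fun σ hσ =>
        hno σ (hσ.trans (erase_subset _ _))
end

section
/- Let the adversary hide a set S of symbols, |S| = αn, from n symbols, and let each of m light nodes sample s symbols i.i.d. uniformly with replacement. The probability that no light node samples any hidden symbol and yet honest full nodes collect fewer than (1−α')n distinct symbols (for α' ≤ α) is at most min{(1−α)^{ms}, 2^{H(α')n}(1−α')^{ms}}; consequently the overall soundness failure probability is at most max over layers of the two-case bound max{(1−α_min)^s, 2^{max_i [H(α_i)n_i − ms·log₂(1/(1−α_i))]}}. -/
/-!
If every light node accepts, each of the `m·s` samples lands in the complement of the hidden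
set, which has `(1 - α)·n` elements; counting such sample vectors bounds the probability by
`(1 - α)^{ms}`. Since `α' ≤ α` and `2^{H(α') n} ≥ 1`, this is already the smaller of the two
bounds. For the layered bound, each layer's term is monotone in `α_i`, and
`2^{H(α_i) n_i} (1 - α_i)^{ms} = 2^{H(α_i) n_i - ms·log₂(1/(1 - α_i))}` is dominated by the
maximum over the layers.
-/

open Finset

lemma binEnt_nonneg {p : ℝ} (hp₀ : 0 ≤ p) (hp₁ : p ≤ 1) : 0 ≤ binEnt p := by
  have hlog {x : ℝ} (hx₀ : 0 ≤ x) (hx₁ : x ≤ 1) : 0 ≤ x * Real.logb 2 (1 / x) := by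
    rw [one_div, Real.logb_inv]
    exact mul_nonneg hx₀ (neg_nonneg.2 (Real.logb_nonpos one_lt_two hx₀ hx₁))
  exact add_nonneg (hlog hp₀ hp₁) (hlog (by linarith) (by linarith))

lemma card_filter_le_card_compl_pow {ι α : Type*} [Fintype ι] [DecidableEq ι] [Fintype α]
    [DecidableEq α] (S : Finset α) (Q : (ι → α) → Prop) [DecidablePred Q]
    (hQ : ∀ f, Q f → ∀ i, f i ∉ S) : #{f | Q f} ≤ #Sᶜ ^ Fintype.card ι := by
  calc #{f | Q f} ≤ #(Fintype.piFinset fun _ : ι => Sᶜ) :=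
        card_le_card fun f hf => Fintype.mem_piFinset.2 fun i => mem_compl.2 <|
          hQ f (mem_filter.1 hf).2 i
    _ = #Sᶜ ^ Fintype.card ι := by simp

lemma card_filter_div_le_one_sub_pow {n : ℕ} {α : ℝ} (hα : α ≤ 1) (k : ℕ)
    (S : Finset (Fin n)) (hS : (#S : ℝ) = α * n) (Q : (Fin k → Fin n) → Prop) [DecidablePred Q]
    (hQ : ∀ f, Q f → ∀ i, f i ∉ S) : (#{f | Q f} : ℝ) / (n : ℝ) ^ k ≤ (1 - α) ^ k := by
  have hcompl : (#Sᶜ : ℝ) = (1 - α) * n := by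
    rw [card_compl, Fintype.card_fin, Nat.cast_sub (by simpa using card_le_univ S), hS]
    ring
  have hcard := card_filter_le_card_compl_pow S Q hQ
  rw [Fintype.card_fin] at hcard
  refine div_le_of_le_mul₀ (by positivity) (pow_nonneg (by linarith) k) ?_
  calc (#{f | Q f} : ℝ) ≤ (#Sᶜ : ℝ) ^ k := mod_cast hcard
    _ = (1 - α) ^ k * (n : ℝ) ^ k := by rw [hcompl, mul_pow]

lemma rpow_mul_pow_eq_rpow_sub_logb {b q : ℝ} (hb₀ : 0 < b) (hb₁ : b ≠ 1) (hq : 0 < q)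
    (a : ℝ) (k : ℕ) : b ^ a * q ^ k = b ^ (a - k * Real.logb b (1 / q)) := by
  have hq_pow : q ^ k = b ^ (k * Real.logb b q) := by
    rw [mul_comm, Real.rpow_mul hb₀.le, Real.rpow_logb hb₀ hb₁ hq, Real.rpow_natCast]
  rw [one_div, Real.logb_inv, mul_neg, sub_neg_eq_add, Real.rpow_add hb₀, hq_pow]

theorem stmt18_general (n m s : ℕ) (α α' : ℝ) (hα : 0 < α ∧ α < 1)
    (hα' : 0 < α' ∧ α' ≤ α) (S : Finset (Fin n)) (hS : (S.card : ℝ) = α * n) :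
    ((((Finset.univ : Finset (Fin (m * s) → Fin n)).filter
          (fun f => (∀ i, f i ∉ S) ∧ ((Finset.univ.image f).card : ℝ) < (1 - α') * n)).card : ℝ) /
        ((n : ℝ) ^ (m * s))
      ≤ min ((1 - α) ^ (m * s)) ((2 : ℝ) ^ (binEnt α' * n) * (1 - α') ^ (m * s))) ∧
    (∀ (L : ℕ), 0 < L → ∀ (ni : Fin L → ℕ) (αi : Fin L → ℝ),
      (∀ i, 0 < αi i ∧ αi i < 1) →
      ∀ Pf : Fin L → ℝ,
        (∀ i, Pf i ≤ max ((1 - αi i) ^ s)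
            ((2 : ℝ) ^ (binEnt (αi i) * (ni i : ℝ)) * (1 - αi i) ^ (m * s))) →
        ∀ i, Pf i ≤ max ((1 - ⨅ j, αi j) ^ s)
            ((2 : ℝ) ^ (⨆ j, (binEnt (αi j) * (ni j : ℝ) -
              (m * s : ℝ) * Real.logb 2 (1 / (1 - αi j)))))) := by
  refine ⟨?_, fun L _ ni αi hαi Pf hPf i => (hPf i).trans (max_le_max ?_ ?_)⟩
  · have hprob := card_filter_div_le_one_sub_pow hα.2.le (m * s) S hS
      (fun f => (∀ i, f i ∉ S) ∧ ((univ.image f).card : ℝ) < (1 - α') * n) fun _ => And.left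
    have hentropy : (1 : ℝ) ≤ 2 ^ (binEnt α' * n) :=
      Real.one_le_rpow one_le_two
        (mul_nonneg (binEnt_nonneg hα'.1.le (hα'.2.trans hα.2.le)) n.cast_nonneg)
    refine le_min hprob (hprob.trans ?_)
    calc (1 - α) ^ (m * s) ≤ (1 - α') ^ (m * s) :=
          pow_le_pow_left₀ (by linarith) (by linarith) _
      _ ≤ 2 ^ (binEnt α' * n) * (1 - α') ^ (m * s) :=
          le_mul_of_one_le_left (pow_nonneg (by linarith) _) hentropy
  · exact pow_le_pow_left₀ (by linarith [hαi i])
      (by linarith [ciInf_le (Set.finite_range αi).bddBelow i]) s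
  · rw [rpow_mul_pow_eq_rpow_sub_logb two_pos (by norm_num) (by linarith [hαi i]),
      Nat.cast_mul]
    exact Real.rpow_le_rpow_of_exponent_le one_le_two <|
      le_ciSup (f := fun j => binEnt (αi j) * ni j - m * s * Real.logb 2 (1 / (1 - αi j)))
        (Set.finite_range _).bddAbove i

/-- the adversary hides a set `S` with `|S| = α·n` of the `n` symbols, and
`m` light nodes each draw `s` i.i.d. uniform samples (modeled jointly as a uniformly
random `f : Fin (m·s) → Fin n`).  (a) The probability that no light node samples a hidden
symbol and yet fewer than `(1−α')·n` distinct symbols are collected (for `α' ≤ α`) is at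
most `min{(1−α)^{ms}, 2^{H(α')n}·(1−α')^{ms}}`.  (b) Consequently, with layers
`i = 1,…,L` having `n_i` symbols and undecodable ratios `α_i`, any per-layer soundness
failure probabilities bounded by the two-case bound are globally bounded by
`max{(1−α_min)^s, 2^{max_i [H(α_i)·n_i − m·s·log₂(1/(1−α_i))]}}`. -/
theorem stmt18 (n m s : ℕ) (α α' : ℝ) (hn : 0 < n) (hα : 0 < α ∧ α < 1)
    (hα' : 0 < α' ∧ α' ≤ α) (S : Finset (Fin n)) (hS : (S.card : ℝ) = α * n) :
    ((((Finset.univ : Finset (Fin (m * s) → Fin n)).filter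
          (fun f => (∀ i, f i ∉ S) ∧ ((Finset.univ.image f).card : ℝ) < (1 - α') * n)).card : ℝ) /
        ((n : ℝ) ^ (m * s))
      ≤ min ((1 - α) ^ (m * s)) ((2 : ℝ) ^ (binEnt α' * n) * (1 - α') ^ (m * s))) ∧
    (∀ (L : ℕ), 0 < L → ∀ (ni : Fin L → ℕ) (αi : Fin L → ℝ),
      (∀ i, 0 < αi i ∧ αi i < 1) →
      ∀ Pf : Fin L → ℝ,
        (∀ i, Pf i ≤ max ((1 - αi i) ^ s)
            ((2 : ℝ) ^ (binEnt (αi i) * (ni i : ℝ)) * (1 - αi i) ^ (m * s))) →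
        ∀ i, Pf i ≤ max ((1 - ⨅ j, αi j) ^ s)
            ((2 : ℝ) ^ (⨆ j, (binEnt (αi j) * (ni j : ℝ) -
              (m * s : ℝ) * Real.logb 2 (1 / (1 - αi j)))))) :=
  stmt18_general n m s α α' hα hα' S hS
end
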